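/- arXiv:1701.05344 — 7 statements merged into one kernel-verified Lean document; each statement's English description precedes it below -/
import Mathlib

section
/- If J is a real square matrix with J + Jᵀ positive definite and F is a real square matrix with F + Fᵀ positive semidefinite, then I + J·F is invertible. -/
open Matrix

section QuadraticForm

variable {n R : Type*} [Fintype n]

theorem Matrix.dotProduct_add_transpose_mulVec [CommRing R] (A : Matrix n n R) (x : n → R) :
    x ⬝ᵥ (A + Aᵀ) *ᵥ x = 2 * (x ⬝ᵥ A *ᵥ x) := by
  rw [add_mulVec, dotProduct_add, dotProduct_mulVec x Aᵀ, vecMul_transpose, dotProduct_comm _ x]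
  ring

theorem Matrix.PosSemidef.dotProduct_mulVec_nonneg_of_add_transpose {F : Matrix n n ℝ}
    (hF : (F + Fᵀ).PosSemidef) (x : n → ℝ) : 0 ≤ x ⬝ᵥ F *ᵥ x := by
  have h := hF.dotProduct_mulVec_nonneg x
  rw [star_trivial, dotProduct_add_transpose_mulVec] at h
  linarith

theorem Matrix.PosDef.eq_zero_of_dotProduct_mulVec_nonpos_of_add_transpose {J : Matrix n n ℝ}
    (hJ : (J + Jᵀ).PosDef) {y : n → ℝ} (hy : y ⬝ᵥ J *ᵥ y ≤ 0) : y = 0 := by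
  by_contra hy0
  have h := hJ.dotProduct_mulVec_pos hy0
  rw [star_trivial, dotProduct_add_transpose_mulVec] at h
  linarith

end QuadraticForm

/-- If `x + J F x = 0`, then `y = F x` satisfies `yᵀ J y = -xᵀ F x ≤ 0`, so `y = 0` and `x = -J y = 0`. -/
theorem Matrix.isUnit_one_add_mul_of_posDef_add_transpose {n : Type*} [Fintype n] [DecidableEq n]
    {J F : Matrix n n ℝ} (hJ : (J + Jᵀ).PosDef) (hF : (F + Fᵀ).PosSemidef) :
    IsUnit (1 + J * F) := by
  rw [← mulVec_injective_iff_isUnit]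
  refine (injective_iff_map_eq_zero (1 + J * F).mulVecLin).mpr fun x hx => ?_
  have hJy : J *ᵥ (F *ᵥ x) = -x := by
    rw [mulVecLin_apply, add_mulVec, one_mulVec, ← mulVec_mulVec] at hx
    exact eq_neg_of_add_eq_zero_right hx
  have hy : F *ᵥ x ⬝ᵥ J *ᵥ (F *ᵥ x) ≤ 0 := by
    rw [hJy, dotProduct_neg, dotProduct_comm, neg_nonpos]
    exact hF.dotProduct_mulVec_nonneg_of_add_transpose x
  rw [← neg_eq_zero, ← hJy, hJ.eq_zero_of_dotProduct_mulVec_nonpos_of_add_transpose hy,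
    mulVec_zero]

theorem stmt0 {m : ℕ} (J F : Matrix (Fin m) (Fin m) ℝ)
    (hJ : (J + Jᵀ).PosDef) (hF : (F + Fᵀ).PosSemidef) :
    IsUnit (1 + J * F) :=
  isUnit_one_add_mul_of_posDef_add_transpose hJ hF
end

section
/- Let F be a real square matrix with F + Fᵀ positive semidefinite and J a real square matrix with J + Jᵀ positive definite, and set Δ = F(I + JF)^{-1} (well-defined by invertibility of I + JF). Then Δ(J + Jᵀ)Δᵀ ≤ Δ + Δᵀ in the Loewner order. -/
/-!
With `B = 1 + F * J`, the push-through identity `B * Δ = F` gives the congruence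
`B * (Δ + Δᵀ - Δ * (J + Jᵀ) * Δᵀ) * Bᵀ = F + Fᵀ`, so the left side is positive semidefinite
as soon as `B` is invertible. If `B * v = 0`, then `w = J * v` satisfies `F * w = -v`, hence
`wᵀ F w = -vᵀ J v`; the symmetric parts of `F` and `J` make the left side `≥ 0` and the right
side `< 0` unless `v = 0`.
-/

open Matrix

namespace Matrix

variable {n R : Type*} [Fintype n]

theorem dotProduct_add_transpose_mulVec_s1 [CommRing R] (M : Matrix n n R) (x : n → R) :
    x ⬝ᵥ (M + Mᵀ) *ᵥ x = 2 * (x ⬝ᵥ M *ᵥ x) := by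
  rw [add_mulVec, dotProduct_add, mulVec_transpose, dotProduct_comm x (vecMul x M),
    ← dotProduct_mulVec]
  ring

theorem isUnit_one_add_mul_of_posSemidef_of_posDef [DecidableEq n] {F J : Matrix n n ℝ}
    (hF : (F + Fᵀ).PosSemidef) (hJ : (J + Jᵀ).PosDef) : IsUnit (1 + F * J) := by
  refine (isUnit_iff_isUnit_det _).2 (isUnit_iff_ne_zero.2 fun hdet => ?_)
  obtain ⟨v, hv, hBv⟩ := exists_mulVec_eq_zero_iff.2 hdet
  have hFJv : F *ᵥ (J *ᵥ v) = -v := by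
    rw [add_mulVec, one_mulVec, ← mulVec_mulVec] at hBv
    exact eq_neg_of_add_eq_zero_right hBv
  have hJpos : 0 < v ⬝ᵥ (J + Jᵀ) *ᵥ v := by simpa using hJ.dotProduct_mulVec_pos hv
  have hFnonneg : 0 ≤ J *ᵥ v ⬝ᵥ (F + Fᵀ) *ᵥ (J *ᵥ v) := by
    simpa using hF.dotProduct_mulVec_nonneg (J *ᵥ v)
  rw [dotProduct_add_transpose_mulVec_s1] at hJpos hFnonneg
  rw [hFJv, dotProduct_neg, dotProduct_comm] at hFnonneg
  linarith

theorem one_add_mul_mul_transpose_eq [DecidableEq n] [CommRing R] {F J Δ : Matrix n n R}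
    (hΔ : (1 + F * J) * Δ = F) :
    (1 + F * J) * (Δ + Δᵀ - Δ * (J + Jᵀ) * Δᵀ) * (1 + F * J)ᵀ = F + Fᵀ := by
  have hΔt : Δᵀ * (1 + F * J)ᵀ = Fᵀ := by rw [← transpose_mul, hΔ]
  calc (1 + F * J) * (Δ + Δᵀ - Δ * (J + Jᵀ) * Δᵀ) * (1 + F * J)ᵀ
      = (1 + F * J) * Δ * (1 + F * J)ᵀ + (1 + F * J) * (Δᵀ * (1 + F * J)ᵀ)
          - (1 + F * J) * Δ * (J + Jᵀ) * (Δᵀ * (1 + F * J)ᵀ) := by noncomm_ring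
    _ = F * (1 + F * J)ᵀ + (1 + F * J) * Fᵀ - F * (J + Jᵀ) * Fᵀ := by rw [hΔ, hΔt]
    _ = F + Fᵀ := by
      simp only [transpose_add, transpose_one, transpose_mul]
      noncomm_ring

end Matrix

theorem stmt1 {m : ℕ} (J F : Matrix (Fin m) (Fin m) ℝ)
    (hJ : (J + Jᵀ).PosDef) (hF : (F + Fᵀ).PosSemidef) :
    letI Δ := F * (1 + J * F)⁻¹
    (Δ + Δᵀ - Δ * (J + Jᵀ) * Δᵀ).PosSemidef := by
  have hB : IsUnit (1 + F * J) := isUnit_one_add_mul_of_posSemidef_of_posDef hF hJ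
  have hA : IsUnit (1 + J * F) := by
    rw [isUnit_iff_isUnit_det, det_one_add_mul_comm, ← isUnit_iff_isUnit_det]
    exact hB
  have hΔ : (1 + F * J) * (F * (1 + J * F)⁻¹) = F := by
    rw [← Matrix.mul_assoc, show (1 + F * J) * F = F * (1 + J * F) by noncomm_ring,
      Matrix.mul_assoc, mul_nonsing_inv _ ((isUnit_iff_isUnit_det _).1 hA), Matrix.mul_one]
  rw [← hB.posSemidef_star_right_conjugate_iff, star_eq_conjTranspose,
    conjTranspose_eq_transpose_of_trivial, one_add_mul_mul_transpose_eq hΔ]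
  exact hF
end

section
/- Conversely, if Δ is a real square matrix such that I − ΔJ is invertible and Δ(J + Jᵀ)Δᵀ ≤ Δ + Δᵀ, where J + Jᵀ is positive definite, then F = (I − ΔJ)^{-1}Δ satisfies F + Fᵀ ≥ 0 and Δ = F(I + JF)^{-1}. -/
open Matrix

theorem stmt2 {m : ℕ} (J Δ : Matrix (Fin m) (Fin m) ℝ)
    (hJ : (J + Jᵀ).PosDef) (hInv : IsUnit (1 - Δ * J))
    (hΔ : (Δ + Δᵀ - Δ * (J + Jᵀ) * Δᵀ).PosSemidef) :
    letI F := (1 - Δ * J)⁻¹ * Δ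
    (F + Fᵀ).PosSemidef ∧ Δ = F * (1 + J * F)⁻¹ := by
  set A := 1 - Δ * J with hA
  set B := 1 - J * Δ with hB
  set F := A⁻¹ * Δ with hFdef
  have hAdet : IsUnit A.det := (Matrix.isUnit_iff_isUnit_det A).mp hInv
  have hdetBA : B.det = A.det := by
    have : (1 + (-J) * Δ).det = (1 + Δ * (-J)).det := Matrix.det_one_add_mul_comm (-J) Δ
    simpa [hA, hB, sub_eq_add_neg, neg_mul, mul_neg] using this
  have hBdet : IsUnit B.det := hdetBA ▸ hAdet
  have hAinv : A * A⁻¹ = 1 := Matrix.mul_nonsing_inv A hAdet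
  have hAinv' : A⁻¹ * A = 1 := Matrix.nonsing_inv_mul A hAdet
  have hBinv : B * B⁻¹ = 1 := Matrix.mul_nonsing_inv B hBdet
  have hBinv' : B⁻¹ * B = 1 := Matrix.nonsing_inv_mul B hBdet
  -- F = Δ * B⁻¹
  have hcomm : A * Δ = Δ * B := by rw [hA, hB]; noncomm_ring
  have hF : F = Δ * B⁻¹ :=
    calc F = A⁻¹ * Δ * (B * B⁻¹) := by rw [hBinv, mul_one, hFdef]
      _ = A⁻¹ * (Δ * B) * B⁻¹ := by noncomm_ring
      _ = A⁻¹ * (A * Δ) * B⁻¹ := by rw [hcomm]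
      _ = A⁻¹ * A * (Δ * B⁻¹) := by noncomm_ring
      _ = Δ * B⁻¹ := by rw [hAinv', one_mul]
  constructor
  · -- F + Fᵀ = A⁻¹ * M * (A⁻¹)ᴴ
    have key : F + Fᵀ = A⁻¹ * (Δ + Δᵀ - Δ * (J + Jᵀ) * Δᵀ) * (A⁻¹)ᴴ := by
      have hAH : (A⁻¹)ᴴ = (Aᵀ)⁻¹ := by
        rw [Matrix.conjTranspose_eq_transpose_of_trivial, Matrix.transpose_nonsing_inv]
      have hFt : Fᵀ = Δᵀ * (Aᵀ)⁻¹ := by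
        simp [F, Matrix.transpose_mul, Matrix.transpose_nonsing_inv]
      have hM : Δ + Δᵀ - Δ * (J + Jᵀ) * Δᵀ = Δ * Aᵀ + A * Δᵀ := by
        rw [hA]
        simp [Matrix.transpose_sub, Matrix.transpose_mul, Matrix.transpose_one,
          Matrix.transpose_add]
        noncomm_ring
      rw [hAH, hM, hFt]
      have hAt : IsUnit Aᵀ.det := by rwa [Matrix.det_transpose]
      have : A⁻¹ * (Δ * Aᵀ + A * Δᵀ) * (Aᵀ)⁻¹
          = A⁻¹ * Δ * (Aᵀ * (Aᵀ)⁻¹) + (A⁻¹ * A) * (Δᵀ * (Aᵀ)⁻¹) := by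
        noncomm_ring
      rw [this, Matrix.mul_nonsing_inv _ hAt, hAinv', mul_one, one_mul]
    rw [key]
    exact hΔ.mul_mul_conjTranspose_same A⁻¹
  · -- 1 + J * F = B⁻¹
    have h1 : 1 + J * F = B⁻¹ := by
      rw [hF, ← mul_assoc]
      calc (1 : Matrix (Fin m) (Fin m) ℝ) + J * Δ * B⁻¹
          = (B + J * Δ) * B⁻¹ := by rw [add_mul, hBinv]
        _ = B⁻¹ := by rw [hB]; simp
    rw [h1, Matrix.nonsing_inv_nonsing_inv B hBdet, hF, mul_assoc, hBinv', mul_one]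
end

section
/- For any real matrices M ∈ ℝ^{n×m}, N ∈ ℝ^{m×n}, any real m×m matrix Δ satisfying Δ(E)Δᵀ ≤ Δ + Δᵀ for a positive definite symmetric E, and any scalar ρ > 0, the inequality Sym(MΔN) ≤ Sym(M E^{-1} N) + ρ^{-2} M E^{-1} Mᵀ + ρ² Nᵀ E^{-1} N holds in the Loewner order. -/
open Matrix

namespace Matrix

variable {m n : Type*} [Fintype m]

lemma PosSemidef.transpose_mul_mul_same [Fintype n] {A : Matrix m m ℝ} (hA : A.PosSemidef)
    (B : Matrix m n ℝ) : (Bᵀ * A * B).PosSemidef := by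
  simpa [conjTranspose_eq_transpose_of_trivial] using hA.conjTranspose_mul_mul_same B

lemma PosSemidef.mul_mul_transpose_same [Fintype n] {A : Matrix m m ℝ} (hA : A.PosSemidef)
    (B : Matrix n m ℝ) : (B * A * Bᵀ).PosSemidef := by
  simpa [conjTranspose_eq_transpose_of_trivial] using hA.mul_mul_conjTranspose_same B

variable [DecidableEq m]

/-- Completion of the square in `F = E⁻¹ (Mᵀ + N) - Δᵀ Mᵀ`. -/
lemma sym_mul_inv_mul_add_sub_sym_mul_mul_eq {E : Matrix m m ℝ} (hE : IsUnit E.det)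
    (hEsymm : E.IsSymm) (Δ : Matrix m m ℝ) (M : Matrix n m ℝ) (N : Matrix m n ℝ) :
    M * E⁻¹ * N + (M * E⁻¹ * N)ᵀ + M * E⁻¹ * Mᵀ + Nᵀ * E⁻¹ * N - (M * Δ * N + (M * Δ * N)ᵀ) =
      (E⁻¹ * (Mᵀ + N) - Δᵀ * Mᵀ)ᵀ * E * (E⁻¹ * (Mᵀ + N) - Δᵀ * Mᵀ)
        + M * (Δ + Δᵀ - Δ * E * Δᵀ) * Mᵀ := by
  have hEinvT : E⁻¹ᵀ = E⁻¹ := by rw [transpose_nonsing_inv, hEsymm.eq]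
  simp only [transpose_add, transpose_sub, transpose_mul, transpose_transpose, hEinvT,
    Matrix.add_mul, Matrix.mul_add, Matrix.sub_mul, Matrix.mul_sub, Matrix.mul_assoc,
    mul_nonsing_inv_cancel_left E _ hE, nonsing_inv_mul_cancel_left E _ hE]
  abel

lemma posSemidef_sym_mul_inv_mul_add_sub_sym_mul_mul [Fintype n] {E Δ : Matrix m m ℝ}
    (hE : E.PosDef) (hΔ : (Δ + Δᵀ - Δ * E * Δᵀ).PosSemidef) (M : Matrix n m ℝ) (N : Matrix m n ℝ) :
    (M * E⁻¹ * N + (M * E⁻¹ * N)ᵀ + M * E⁻¹ * Mᵀ + Nᵀ * E⁻¹ * N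
      - (M * Δ * N + (M * Δ * N)ᵀ)).PosSemidef := by
  rw [sym_mul_inv_mul_add_sub_sym_mul_mul_eq hE.det_pos.ne'.isUnit
    (isHermitian_iff_isSymm.mp hE.isHermitian)]
  exact (hE.posSemidef.transpose_mul_mul_same _).add (hΔ.mul_mul_transpose_same M)

end Matrix

theorem stmt3_general {n m : ℕ} (M : Matrix (Fin n) (Fin m) ℝ) (N : Matrix (Fin m) (Fin n) ℝ)
    (E Δ : Matrix (Fin m) (Fin m) ℝ) (hE : E.PosDef)
    (hΔ : (Δ + Δᵀ - Δ * E * Δᵀ).PosSemidef) (ρ : ℝ) (hρ : 0 < ρ) :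
    ((M * E⁻¹ * N + (M * E⁻¹ * N)ᵀ) + (ρ ^ 2)⁻¹ • (M * E⁻¹ * Mᵀ)
        + (ρ ^ 2) • (Nᵀ * E⁻¹ * N)
      - (M * Δ * N + (M * Δ * N)ᵀ)).PosSemidef := by
  -- the case `ρ = 1`, applied to `ρ⁻¹ M` and `ρ N`
  convert posSemidef_sym_mul_inv_mul_add_sub_sym_mul_mul hE hΔ (ρ⁻¹ • M) (ρ • N) using 1
  simp only [Matrix.smul_mul, Matrix.mul_smul, transpose_smul, smul_smul, mul_inv_cancel₀ hρ.ne',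
    one_smul, sq, mul_inv]

theorem stmt3 {n m : ℕ} (M : Matrix (Fin n) (Fin m) ℝ) (N : Matrix (Fin m) (Fin n) ℝ)
    (E Δ : Matrix (Fin m) (Fin m) ℝ) (hE : E.PosDef) (hEsymm : E.IsSymm)
    (hΔ : (Δ + Δᵀ - Δ * E * Δᵀ).PosSemidef) (ρ : ℝ) (hρ : 0 < ρ) :
    ((M * E⁻¹ * N + (M * E⁻¹ * N)ᵀ) + (ρ ^ 2)⁻¹ • (M * E⁻¹ * Mᵀ)
        + (ρ ^ 2) • (Nᵀ * E⁻¹ * N)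
      - (M * Δ * N + (M * Δ * N)ᵀ)).PosSemidef :=
  stmt3_general M N E Δ hE hΔ ρ hρ
end

section
/- Let A ∈ ℝ^{n×n}, 0 < α < 1, θ = (1−α)π/2, r = e^{iθ}. If there exists a Hermitian positive definite matrix X ∈ ℂ^{n×n} such that (rX + r̄X̄)ᵀAᵀ + A(rX + r̄X̄) is negative definite, then every eigenvalue λ of A satisfies |arg(λ)| > απ/2. -/
/-!
Since `A` is real, an eigenvalue `λ` of `A` has a left eigenvector `v` with `v* A = λ̄ v*`.
For Hermitian `X` we have `X̄ = Xᵀ`, and with `a = v* X v > 0`, `b = v* Xᵀ v > 0` the quadratic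
form of `Sᵀ Aᵀ + A S` at `v` equals `2 (a Re(λ r̄) + b Re(λ r))`. If `|arg λ| ≤ απ/2` then
`arg λ ± θ` lies in `[-π/2, π/2]`, so both real parts are nonnegative and the form cannot be
negative.
-/

open Matrix Complex ComplexOrder

namespace Complex

theorem re_mul_exp_mul_I (z : ℂ) (θ : ℝ) :
    (z * exp (θ * I)).re = ‖z‖ * Real.cos (z.arg + θ) := by
  conv_lhs => rw [← norm_mul_exp_arg_mul_I z]
  rw [mul_assoc, ← exp_add, ← add_mul, ← ofReal_add, re_ofReal_mul, exp_ofReal_mul_I_re]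

theorem re_mul_exp_mul_I_nonneg {z : ℂ} {θ : ℝ} (h : |z.arg + θ| ≤ Real.pi / 2) :
    0 ≤ (z * exp (θ * I)).re := by
  rw [re_mul_exp_mul_I]
  exact mul_nonneg (norm_nonneg z)
    (Real.cos_nonneg_of_neg_pi_div_two_le_of_le (abs_le.1 h).1 (abs_le.1 h).2)

theorem star_exp_ofReal_mul_I (θ : ℝ) : star (exp (θ * I)) = exp ((-θ : ℝ) * I) := by
  rw [star_def, ← exp_conj]; simp

end Complex

namespace Matrix

variable {m n R : Type*}

theorem spectrum_transpose [Fintype n] [DecidableEq n] [CommRing R] (M : Matrix n n R) :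
    spectrum R Mᵀ = spectrum R M := by
  ext r
  rw [spectrum.mem_iff, spectrum.mem_iff, ← isUnit_transpose, transpose_sub,
    transpose_transpose, algebraMap_eq_diagonal, diagonal_transpose]

theorem exists_mulVec_eq_smul_of_mem_spectrum [Fintype n] [DecidableEq n] {K : Type*} [Field K]
    {M : Matrix n n K} {μ : K} (h : μ ∈ spectrum K M) : ∃ v ≠ 0, M *ᵥ v = μ • v := by
  rw [← spectrum_toLin', ← Module.End.hasEigenvalue_iff_mem_spectrum] at h
  obtain ⟨v, hv, hv0⟩ := h.exists_hasEigenvector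
  exact ⟨v, hv0, by simpa using Module.End.mem_eigenspace_iff.1 hv⟩

theorem conjTranspose_map_ofReal (A : Matrix m n ℝ) :
    (A.map ((↑) : ℝ → ℂ))ᴴ = (A.map ((↑) : ℝ → ℂ))ᵀ := by
  ext i j; simp

theorem IsHermitian.map_star [Star R] {X : Matrix n n R} (hX : X.IsHermitian) :
    X.map star = Xᵀ := by
  rw [← conjTranspose_transpose, hX.eq]

theorem star_dotProduct_mul_conjTranspose_add_mul_mulVec [Fintype n] [CommRing R] [StarRing R]
    {A B C : Matrix n n R} {v : n → R} {μ : R} (hv : Aᴴ *ᵥ v = μ • v) :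
    star v ⬝ᵥ ((B * Aᴴ + A * C) *ᵥ v) =
      μ * (star v ⬝ᵥ B *ᵥ v) + star μ * (star v ⬝ᵥ C *ᵥ v) := by
  have hvA : star v ᵥ* A = star μ • star v := by
    rw [← conjTranspose_conjTranspose A, ← star_mulVec, hv, star_smul]
  rw [add_mulVec, dotProduct_add, ← mulVec_mulVec, ← mulVec_mulVec, hv, mulVec_smul,
    dotProduct_smul, dotProduct_mulVec (star v) A, hvA, smul_dotProduct, smul_eq_mul, smul_eq_mul]

theorem IsHermitian.star_dotProduct_lyapunov_mulVec [Fintype n] {X A : Matrix n n ℂ}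
    (hX : X.IsHermitian) {v : n → ℂ} {μ : ℂ} (hv : Aᴴ *ᵥ v = μ • v) (r : ℂ) :
    letI S := r • X + star r • X.map star
    star v ⬝ᵥ ((Sᵀ * Aᴴ + A * S) *ᵥ v) =
      2 * ((star v ⬝ᵥ X *ᵥ v) * (μ * star r).re + (star v ⬝ᵥ Xᵀ *ᵥ v) * (μ * r).re) := by
  rw [star_dotProduct_mul_conjTranspose_add_mul_mulVec hv, hX.map_star]
  simp only [transpose_add, transpose_smul, transpose_transpose, add_mulVec, smul_mulVec,
    dotProduct_add, dotProduct_smul, smul_eq_mul]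
  have hre (z : ℂ) : 2 * (z.re : ℂ) = z + star z := by
    rw [star_def, add_conj]; push_cast; rfl
  have h₁ := hre (μ * star r)
  have h₂ := hre (μ * r)
  simp only [star_mul', star_star] at h₁ h₂
  linear_combination -(star v ⬝ᵥ X *ᵥ v) * h₁ - (star v ⬝ᵥ Xᵀ *ᵥ v) * h₂

end Matrix

theorem stmt6_general {n : ℕ} (A : Matrix (Fin n) (Fin n) ℝ) (α : ℝ) (hα1 : α < 1)
    (X : Matrix (Fin n) (Fin n) ℂ) (hX : X.PosDef) :
    letI θ : ℝ := (1 - α) * Real.pi / 2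
    letI r : ℂ := Complex.exp (θ * Complex.I)
    letI Aℂ : Matrix (Fin n) (Fin n) ℂ := A.map (fun a => (a : ℂ))
    letI S : Matrix (Fin n) (Fin n) ℂ := r • X + (starRingEnd ℂ r) • X.map (starRingEnd ℂ)
    (-(Sᵀ * Aℂᵀ + Aℂ * S)).PosDef →
    ∀ lam ∈ spectrum ℂ Aℂ, |lam.arg| > α * Real.pi / 2 := by
  intro hP lam hlam
  by_contra! hsmall
  set θ : ℝ := (1 - α) * Real.pi / 2
  obtain ⟨v, hv0, hv⟩ := exists_mulVec_eq_smul_of_mem_spectrum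
    ((spectrum_transpose (A.map ((↑) : ℝ → ℂ))).symm ▸ hlam)
  rw [← conjTranspose_map_ofReal] at hv
  have hQ := hP.dotProduct_mulVec_pos hv0
  rw [← conjTranspose_map_ofReal, neg_mulVec, dotProduct_neg, ← star_def,
    hX.isHermitian.star_dotProduct_lyapunov_mulVec hv, star_exp_ofReal_mul_I] at hQ
  have hθ : 0 < (1 - α) * Real.pi := mul_pos (sub_pos.2 hα1) Real.pi_pos
  have hcone : |lam.arg + θ| ≤ Real.pi / 2 ∧ |lam.arg + -θ| ≤ Real.pi / 2 := by
    simp only [θ, abs_le] at hsmall ⊢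
    refine ⟨⟨?_, ?_⟩, ?_, ?_⟩ <;> linarith
  have hfwd := re_mul_exp_mul_I_nonneg hcone.1
  have hbwd := re_mul_exp_mul_I_nonneg hcone.2
  have ha := (hX.dotProduct_mulVec_pos hv0).le
  have hb := (hX.transpose.dotProduct_mulVec_pos hv0).le
  refine (neg_pos.1 hQ).not_ge ?_
  positivity

theorem stmt6 {n : ℕ} (A : Matrix (Fin n) (Fin n) ℝ) (α : ℝ) (hα : 0 < α) (hα1 : α < 1)
    (X : Matrix (Fin n) (Fin n) ℂ) (hX : X.PosDef) :
    letI θ : ℝ := (1 - α) * Real.pi / 2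
    letI r : ℂ := Complex.exp (θ * Complex.I)
    letI Aℂ : Matrix (Fin n) (Fin n) ℂ := A.map (fun a => (a : ℂ))
    letI S : Matrix (Fin n) (Fin n) ℂ := r • X + (starRingEnd ℂ r) • X.map (starRingEnd ℂ)
    (-(Sᵀ * Aℂᵀ + Aℂ * S)).PosDef →
    ∀ lam ∈ spectrum ℂ Aℂ, |lam.arg| > α * Real.pi / 2 :=
  stmt6_general A α hα1 X hX
end

section
/- Let E be symmetric positive definite, M, N real matrices of compatible dimensions, and ρ > 0. Define F = E^{-1/2}(ρ^{-1}Mᵀ + ρN) − E^{1/2}Δᵀρ^{-1}Mᵀ for a square matrix Δ. Then FᵀF = Sym(ME^{-1}N) + ρ^{-2}ME^{-1}Mᵀ + ρ²NᵀE^{-1}N − Sym(MΔN) − ρ^{-2}M(Sym(Δ) − ΔEΔᵀ)Mᵀ. -/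
/-! Write `F = R⁻¹ X - R Y` with `X = ρ⁻¹ Mᵀ + ρ N` and `Y = Δᵀ ρ⁻¹ Mᵀ`. Since `R` is symmetric,
the cross terms of `Fᵀ F` lose their factors `R⁻¹ R`, leaving
`Fᵀ F = Xᵀ E⁻¹ X - Xᵀ Y - Yᵀ X + Yᵀ E Y`; expanding in `ρ` gives the identity. -/

open Matrix

namespace Matrix

variable {m k α : Type*} [Fintype m] [DecidableEq m] [CommRing α]

theorem transpose_mul_self_inv_mul_sub_mul {R E : Matrix m m α} (hR : IsUnit R.det) (hRs : R.IsSymm)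
    (hRR : R * R = E) (X Y : Matrix m k α) :
    (R⁻¹ * X - R * Y)ᵀ * (R⁻¹ * X - R * Y)
      = Xᵀ * E⁻¹ * X - Xᵀ * Y - Yᵀ * X + Yᵀ * E * Y := by
  have hRinvT : (R⁻¹)ᵀ = R⁻¹ := by rw [transpose_nonsing_inv, hRs.eq]
  have hRinv_mul : ∀ Z : Matrix m k α, R⁻¹ * (R * Z) = Z := fun Z => by
    rw [← Matrix.mul_assoc, nonsing_inv_mul R hR, Matrix.one_mul]
  have hR_mul_inv : ∀ Z : Matrix m k α, R * (R⁻¹ * Z) = Z := fun Z => by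
    rw [← Matrix.mul_assoc, mul_nonsing_inv R hR, Matrix.one_mul]
  subst hRR
  simp only [transpose_sub, transpose_mul, hRinvT, hRs.eq, Matrix.sub_mul, Matrix.mul_sub,
    Matrix.mul_inv_rev, Matrix.mul_assoc, hRinv_mul, hR_mul_inv]
  abel

end Matrix

theorem stmt17_general {n m : ℕ} (E R : Matrix (Fin m) (Fin m) ℝ)
    (hEsymm : E.IsSymm)
    (hR : R.PosDef) (hRsymm : R.IsSymm) (hRR : R * R = E)
    (M : Matrix (Fin n) (Fin m) ℝ) (N : Matrix (Fin m) (Fin n) ℝ)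
    (Δ : Matrix (Fin m) (Fin m) ℝ) (ρ : ℝ) (hρ : 0 < ρ) :
    letI F := R⁻¹ * (ρ⁻¹ • Mᵀ + ρ • N) - R * Δᵀ * (ρ⁻¹ • Mᵀ)
    Fᵀ * F
      = (M * E⁻¹ * N + (M * E⁻¹ * N)ᵀ) + (ρ ^ 2)⁻¹ • (M * E⁻¹ * Mᵀ)
          + (ρ ^ 2) • (Nᵀ * E⁻¹ * N)
        - (M * Δ * N + (M * Δ * N)ᵀ)
        - (ρ ^ 2)⁻¹ • (M * ((Δ + Δᵀ) - Δ * E * Δᵀ) * Mᵀ) := by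
  have hRdet : IsUnit R.det := isUnit_iff_ne_zero.mpr hR.det_pos.ne'
  rw [Matrix.mul_assoc R,
    transpose_mul_self_inv_mul_sub_mul hRdet hRsymm hRR (ρ⁻¹ • Mᵀ + ρ • N) (Δᵀ * (ρ⁻¹ • Mᵀ))]
  have hρinv_mul : ρ⁻¹ * ρ = 1 := inv_mul_cancel₀ hρ.ne'
  have hρ_mul_inv : ρ * ρ⁻¹ = 1 := mul_inv_cancel₀ hρ.ne'
  have hρinv_sq : ρ⁻¹ * ρ⁻¹ = (ρ ^ 2)⁻¹ := by rw [← mul_inv, sq]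
  simp only [transpose_add, transpose_mul, transpose_smul, transpose_transpose, hEsymm.inv.eq,
    Matrix.sub_mul, Matrix.mul_sub, Matrix.add_mul, Matrix.mul_add, Matrix.smul_mul,
    Matrix.mul_smul, smul_smul, Matrix.mul_assoc, hρinv_mul, hρ_mul_inv, hρinv_sq, ← sq, one_smul,
    smul_sub, smul_add]
  abel

theorem stmt17 {n m : ℕ} (E R : Matrix (Fin m) (Fin m) ℝ)
    (hE : E.PosDef) (hEsymm : E.IsSymm)
    (hR : R.PosDef) (hRsymm : R.IsSymm) (hRR : R * R = E)
    (M : Matrix (Fin n) (Fin m) ℝ) (N : Matrix (Fin m) (Fin n) ℝ)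
    (Δ : Matrix (Fin m) (Fin m) ℝ) (ρ : ℝ) (hρ : 0 < ρ) :
    letI F := R⁻¹ * (ρ⁻¹ • Mᵀ + ρ • N) - R * Δᵀ * (ρ⁻¹ • Mᵀ)
    Fᵀ * F
      = (M * E⁻¹ * N + (M * E⁻¹ * N)ᵀ) + (ρ ^ 2)⁻¹ • (M * E⁻¹ * Mᵀ)
          + (ρ ^ 2) • (Nᵀ * E⁻¹ * N)
        - (M * Δ * N + (M * Δ * N)ᵀ)
        - (ρ ^ 2)⁻¹ • (M * ((Δ + Δᵀ) - Δ * E * Δᵀ) * Mᵀ) :=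
  stmt17_general E R hEsymm hR hRsymm hRR M N Δ ρ hρ
end

section
/- If A and Aᵀ are similar matrices (which holds for every real square matrix A), then for symmetric positive definite X, negative definiteness of [[(AᵀX + XA)sinθ, (XA − AᵀX)cosθ],[•, (AᵀX + XA)sinθ]] for some X > 0 is equivalent to negative definiteness of Sym(Θ ⊗ (AY)) for some symmetric Y > 0, where Θ = [[sinθ, −cosθ],[cosθ, sinθ]]. -/
/-!
Write `Y = X⁻¹`. Up to the reordering `Fin 2 × ι ≃ ι ⊕ ι` of the index set, `Θ ⊗ B + (Θ ⊗ B)ᵀ`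
is the block matrix `[[s (B + Bᵀ), c (Bᵀ - B)], [c (B - Bᵀ), s (B + Bᵀ)]]` with `s = sin θ`,
`c = cos θ`, and the first block matrix of the theorem is this one for `B = Aᵀ X`.
The congruence by the invertible symmetric matrix `[[0, Y], [Y, 0]]` swaps the two diagonal
blocks and replaces `B` by `Y Bᵀ Y`, which is `A Y` for `B = Aᵀ X`. Congruence and reindexing
preserve (negative) definiteness, and `X ↦ X⁻¹` is an involution of the positive definite cone.
-/

open Matrix Kronecker

namespace Matrix

variable {ι κ R : Type*}

theorem posDef_submatrix_equiv_iff [Ring R] [PartialOrder R] [StarRing R] [Fintype ι] [Fintype κ]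
    {M : Matrix ι ι R} (e : κ ≃ ι) : (M.submatrix e e).PosDef ↔ M.PosDef :=
  ⟨fun h => by simpa using h.submatrix e.symm.injective, fun h => h.submatrix e.injective⟩

theorem PosDef.transpose_eq [Ring R] [PartialOrder R] [StarRing R] [TrivialStar R]
    {M : Matrix ι ι R} (hM : M.PosDef) : Mᵀ = M :=
  isHermitian_iff_isSymm.1 hM.isHermitian

def finTwoProdEquivSum (ι : Type*) : Fin 2 × ι ≃ ι ⊕ ι :=
  (finTwoEquiv.prodCongr (Equiv.refl ι)).trans (Equiv.boolProdEquivSum ι)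

section CommRing

variable [CommRing R]

/-- `Θ ⊗ P + (Θ ⊗ P)ᵀ` for `Θ = !![s, -c; c, s]`, in block form. -/
def rotSymBlocks (s c : R) (P : Matrix ι ι R) : Matrix (ι ⊕ ι) (ι ⊕ ι) R :=
  fromBlocks (s • (P + Pᵀ)) (c • (Pᵀ - P)) (c • (P - Pᵀ)) (s • (P + Pᵀ))

theorem kronecker_add_transpose_eq_rotSymBlocks (s c : R) (P : Matrix ι ι R) :
    !![s, -c; c, s] ⊗ₖ P + (!![s, -c; c, s] ⊗ₖ P)ᵀ =
      (rotSymBlocks s c P).submatrix (finTwoProdEquivSum ι) (finTwoProdEquivSum ι) := by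
  ext ⟨i, k⟩ ⟨j, l⟩
  fin_cases i <;> fin_cases j <;>
    simp [rotSymBlocks, finTwoProdEquivSum, finTwoEquiv, Equiv.boolProdEquivSum] <;> ring

variable [Fintype ι]

theorem rotSymBlocks_transpose_mul (s c : R) (A : Matrix ι ι R) {X : Matrix ι ι R}
    (hX : Xᵀ = X) :
    rotSymBlocks s c (Aᵀ * X) =
      fromBlocks (s • (Aᵀ * X + X * A)) (c • (X * A - Aᵀ * X))
        (c • (Aᵀ * X - X * A)) (s • (Aᵀ * X + X * A)) := by
  simp [rotSymBlocks, hX]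

theorem fromBlocks_swap_mul_rotSymBlocks_mul (s c : R) (P : Matrix ι ι R) {Y : Matrix ι ι R}
    (hY : Yᵀ = Y) :
    fromBlocks 0 Y Y 0 * rotSymBlocks s c P * fromBlocks 0 Y Y 0 =
      rotSymBlocks s c (Y * Pᵀ * Y) := by
  simp [rotSymBlocks, fromBlocks_multiply, hY, Matrix.mul_add, Matrix.add_mul, Matrix.mul_sub,
    Matrix.sub_mul, Matrix.mul_assoc, add_comm]

end CommRing

theorem posDef_neg_rotSymBlocks_transpose_mul_iff_of_mul_eq_one [CommRing R] [PartialOrder R]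
    [StarRing R] [TrivialStar R] [Fintype ι] [DecidableEq ι] (s c : R) (A : Matrix ι ι R)
    {X Y : Matrix ι ι R} (hX : Xᵀ = X) (hY : Yᵀ = Y) (hXY : X * Y = 1) (hYX : Y * X = 1) :
    (-rotSymBlocks s c (Aᵀ * X)).PosDef ↔ (-rotSymBlocks s c (A * Y)).PosDef := by
  have hC : IsUnit (fromBlocks 0 Y Y 0) :=
    ⟨⟨fromBlocks 0 Y Y 0, fromBlocks 0 X X 0, by simp [fromBlocks_multiply, hYX],
      by simp [fromBlocks_multiply, hXY]⟩, rfl⟩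
  have hBY : Y * (Aᵀ * X)ᵀ * Y = A * Y := by
    rw [transpose_mul, transpose_transpose, hX, ← Matrix.mul_assoc, hYX, Matrix.one_mul]
  rw [← hC.posDef_star_left_conjugate_iff, star_eq_conjTranspose,
    conjTranspose_eq_transpose_of_trivial, fromBlocks_transpose, hY, transpose_zero,
    Matrix.mul_neg, Matrix.neg_mul, fromBlocks_swap_mul_rotSymBlocks_mul s c _ hY, hBY]

theorem PosDef.posDef_neg_rotSymBlocks_transpose_mul_iff {K : Type*} [Field K] [PartialOrder K]
    [StarRing K] [TrivialStar K] [Fintype ι] [DecidableEq ι] (s c : K) (A : Matrix ι ι K)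
    {X : Matrix ι ι K} (hX : X.PosDef) :
    (-rotSymBlocks s c (Aᵀ * X)).PosDef ↔ (-rotSymBlocks s c (A * X⁻¹)).PosDef :=
  have hdet : IsUnit X.det := (isUnit_iff_isUnit_det X).1 hX.isUnit
  posDef_neg_rotSymBlocks_transpose_mul_iff_of_mul_eq_one s c A hX.transpose_eq
    hX.inv.transpose_eq (mul_nonsing_inv X hdet) (nonsing_inv_mul X hdet)

theorem posDef_neg_kronecker_add_transpose_iff [CommRing R] [PartialOrder R] [StarRing R]
    [Fintype ι] (s c : R) (P : Matrix ι ι R) :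
    (-(!![s, -c; c, s] ⊗ₖ P + (!![s, -c; c, s] ⊗ₖ P)ᵀ)).PosDef ↔ (-rotSymBlocks s c P).PosDef := by
  rw [kronecker_add_transpose_eq_rotSymBlocks,
    ← posDef_submatrix_equiv_iff (finTwoProdEquivSum ι)]
  rfl

end Matrix

theorem stmt18_general {n : ℕ} (A : Matrix (Fin n) (Fin n) ℝ) (θ : ℝ) :
    letI Θ : Matrix (Fin 2) (Fin 2) ℝ :=
      !![Real.sin θ, -Real.cos θ; Real.cos θ, Real.sin θ]
    ((∃ X : Matrix (Fin n) (Fin n) ℝ, X.PosDef ∧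
        (-(fromBlocks (Real.sin θ • (Aᵀ * X + X * A)) (Real.cos θ • (X * A - Aᵀ * X))
            (Real.cos θ • (Aᵀ * X - X * A)) (Real.sin θ • (Aᵀ * X + X * A)))).PosDef) ↔
      (∃ Y : Matrix (Fin n) (Fin n) ℝ, Y.PosDef ∧
        (-(Θ ⊗ₖ (A * Y) + (Θ ⊗ₖ (A * Y))ᵀ)).PosDef)) := by
  simp only [posDef_neg_kronecker_add_transpose_iff]
  constructor
  · rintro ⟨X, hX, h⟩
    refine ⟨X⁻¹, hX.inv, ?_⟩
    rwa [← hX.posDef_neg_rotSymBlocks_transpose_mul_iff,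
      rotSymBlocks_transpose_mul _ _ _ hX.transpose_eq]
  · rintro ⟨Y, hY, h⟩
    refine ⟨Y⁻¹, hY.inv, ?_⟩
    rwa [← rotSymBlocks_transpose_mul _ _ _ hY.inv.transpose_eq,
      hY.inv.posDef_neg_rotSymBlocks_transpose_mul_iff,
      nonsing_inv_nonsing_inv Y ((isUnit_iff_isUnit_det Y).1 hY.isUnit)]

theorem stmt18 {n : ℕ} (A : Matrix (Fin n) (Fin n) ℝ) (θ : ℝ)
    (hθ0 : 0 < θ) (hθ : θ ≤ Real.pi / 2) :
    letI Θ : Matrix (Fin 2) (Fin 2) ℝ :=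
      !![Real.sin θ, -Real.cos θ; Real.cos θ, Real.sin θ]
    ((∃ X : Matrix (Fin n) (Fin n) ℝ, X.PosDef ∧
        (-(fromBlocks (Real.sin θ • (Aᵀ * X + X * A)) (Real.cos θ • (X * A - Aᵀ * X))
            (Real.cos θ • (Aᵀ * X - X * A)) (Real.sin θ • (Aᵀ * X + X * A)))).PosDef) ↔
      (∃ Y : Matrix (Fin n) (Fin n) ℝ, Y.PosDef ∧
        (-(Θ ⊗ₖ (A * Y) + (Θ ⊗ₖ (A * Y))ᵀ)).PosDef)) :=
  stmt18_general A θ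
end
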